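/- Suppose Φ : Ω → ℝ^n is a homeomorphism onto its image, defined on an open set Ω ⊆ ℝ^n, which maps Lebesgue null sets to null sets and is approximately differentiable almost everywhere. Then for every nonnegative measurable function g : Ω → [0,∞], ∫_Ω g(x)|det ap DΦ(x)| dx = ∫_{Φ(Ω)} g(Φ^{-1}(y)) dy. -/

import Mathlib

open MeasureTheory Metric Set Filter Topology ENNReal

noncomputable section

abbrev Euc (n : ℕ) := EuclideanSpace ℝ (Fin n)

def DensityPt {n : ℕ} (S : Set (Euc n)) (x : Euc n) : Prop :=
  Tendsto (fun ρ : ℝ => volume (S ∩ ball x ρ) / volume (ball x ρ)) (𝓝[>] 0) (𝓝 1)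

def HasApproxDerivAt {n : ℕ} (f : Euc n → Euc n) (L : Euc n →L[ℝ] Euc n) (x : Euc n) : Prop :=
  ∃ S : Set (Euc n), MeasurableSet S ∧ DensityPt S x ∧
    Tendsto (fun y => ‖f y - f x - L (y - x)‖ / ‖y - x‖) (𝓝[S \ {x}] x) (𝓝 0)

/-!
Stepanov-type decomposition. For `K, r > 0`, call `x` tame if at every radius `ρ < r` the points
`y ∈ ball x ρ` with `dist (f y) (f x) > K * dist y x` fill only a small fraction of the ball. Two
tame points `x, z` then share a common non-steep point `y`, so `f` is `5K`-Lipschitz at small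
scales on the set of tame points. Every point of approximate differentiability is tame for some
`K, r`, so countably many such sets cover `Ω` up to a null set. At a density point `x` of such a
set `G`, every `y ∈ G` near `x` lies close to a point of the approximate-differentiability set at
`x`, and the Lipschitz bound on `G` turns the approximate derivative into a derivative within `G`.
The change of variables formula for injective maps differentiable within measurable sets then
applies on each piece, and the Lusin property makes the leftover null set of `Ω` have null image.
-/

section Steep

variable {α β : Type*} [PseudoMetricSpace α] [PseudoMetricSpace β]

def steepSet (f : α → β) (K : ℝ) (x : α) (r : ℝ) : Set α :=
  {y | dist y x < r ∧ K * dist y x < dist (f y) (f x)}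

theorem steepSet_mono (f : α → β) (K : ℝ) (x : α) {r r' : ℝ} (h : r ≤ r') :
    steepSet f K x r ⊆ steepSet f K x r' :=
  fun _ hy => ⟨hy.1.trans_le h, hy.2⟩

theorem dist_le_of_measure_steepSet_add_lt [MeasurableSpace α] {μ : Measure α} {f : α → β}
    {K : ℝ} (hK : 0 ≤ K) {x z : α}
    (h : μ (steepSet f K x (2 * dist x z)) + μ (steepSet f K z (3 * dist x z)) <
      μ (ball x (2 * dist x z))) :
    dist (f x) (f z) ≤ 5 * K * dist x z := by
  obtain ⟨y, hyx, hy⟩ : (ball x (2 * dist x z) \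
      (steepSet f K x (2 * dist x z) ∪ steepSet f K z (3 * dist x z))).Nonempty :=
    sdiff_nonempty.2 fun hsub => ((measure_mono hsub).trans (measure_union_le _ _)).not_gt h
  rw [mem_ball] at hyx
  have hyz : dist y z < 3 * dist x z := by linarith [dist_triangle y x z]
  have hfx : dist (f y) (f x) ≤ K * dist y x := not_lt.1 fun h' => hy (Or.inl ⟨hyx, h'⟩)
  have hfz : dist (f y) (f z) ≤ K * dist y z := not_lt.1 fun h' => hy (Or.inr ⟨hyz, h'⟩)
  calc dist (f x) (f z) ≤ dist (f y) (f x) + dist (f y) (f z) := dist_triangle_left _ _ _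
    _ ≤ K * (2 * dist x z) + K * (3 * dist x z) := by
        gcongr
        exacts [hfx.trans (by gcongr), hfz.trans (by gcongr)]
    _ = 5 * K * dist x z := by ring

theorem measurable_measure_steepSet [MeasurableSpace α] [OpensMeasurableSpace α]
    [SecondCountableTopology α] [MeasurableSpace β] [OpensMeasurableSpace β]
    [SecondCountableTopology β] (μ : Measure α) [SFinite μ] {f : α → β} (hf : Measurable f)
    (K r : ℝ) : Measurable fun x => μ (steepSet f K x r) := by
  refine measurable_measure_prodMk_left (s := {p : α × α | p.2 ∈ steepSet f K p.1 r}) ?_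
  exact (measurableSet_lt (measurable_snd.dist measurable_fst) measurable_const).inter
    (measurableSet_lt (measurable_const.mul (measurable_snd.dist measurable_fst))
      ((hf.comp measurable_snd).dist (hf.comp measurable_fst)))

end Steep

theorem tendsto_measure_ball_diff_inter_div {α : Type*} [PseudoMetricSpace α] [MeasurableSpace α]
    {μ : Measure α} {x : α} {l : Filter ℝ} {S T : Set α}
    (hS : Tendsto (fun ρ => μ (ball x ρ \ S) / μ (ball x ρ)) l (𝓝 0))
    (hT : Tendsto (fun ρ => μ (ball x ρ \ T) / μ (ball x ρ)) l (𝓝 0)) :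
    Tendsto (fun ρ => μ (ball x ρ \ (S ∩ T)) / μ (ball x ρ)) l (𝓝 0) := by
  refine tendsto_of_tendsto_of_tendsto_of_le_of_le tendsto_const_nhds (by simpa using hS.add hT)
    (fun _ => bot_le) fun ρ => ?_
  rw [ENNReal.div_add_div_same, sdiff_inter]
  exact ENNReal.div_le_div_right (measure_union_le _ _) _

theorem norm_sub_sub_le_of_dist_le {F G : Type*} [NormedAddCommGroup F] [NormedSpace ℝ F]
    [NormedAddCommGroup G] [NormedSpace ℝ G] {f : F → G} {L : F →L[ℝ] G} {x y y' : F}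
    {M a ε : ℝ} (hM : 0 ≤ M) (ha : 0 ≤ a) (hLip : dist (f y) (f y') ≤ M * dist y y')
    (hy' : ‖f y' - f x - L (y' - x)‖ ≤ a * ‖y' - x‖) (hnear : dist y' y ≤ ε * dist y x) :
    ‖f y - f x - L (y - x)‖ ≤ ((M + ‖L‖) * ε + a * (1 + ε)) * ‖y - x‖ := by
  rw [dist_eq_norm, dist_eq_norm] at hLip hnear
  rw [norm_sub_rev y y'] at hLip
  have hy'x : ‖y' - x‖ ≤ (1 + ε) * ‖y - x‖ := by
    linarith [norm_sub_le_norm_sub_add_norm_sub y' y x]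
  have hL : L (y' - y) = L (y' - x) - L (y - x) := by
    rw [← map_sub, sub_sub_sub_cancel_right]
  calc ‖f y - f x - L (y - x)‖ = ‖(f y - f y') + (f y' - f x - L (y' - x)) + L (y' - y)‖ := by
        rw [hL]
        congr 1
        abel
    _ ≤ ‖f y - f y'‖ + ‖f y' - f x - L (y' - x)‖ + ‖L (y' - y)‖ := norm_add₃_le
    _ ≤ M * ‖y' - y‖ + a * ‖y' - x‖ + ‖L‖ * ‖y' - y‖ := by
        gcongr
        exact L.le_opNorm _
    _ ≤ M * (ε * ‖y - x‖) + a * ((1 + ε) * ‖y - x‖) + ‖L‖ * (ε * ‖y - x‖) := by gcongr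
    _ = ((M + ‖L‖) * ε + a * (1 + ε)) * ‖y - x‖ := by ring

theorem eventually_dist_le_of_tendsto_div {F G : Type*} [NormedAddCommGroup F]
    [NormedSpace ℝ F] [NormedAddCommGroup G] [NormedSpace ℝ G] {f : F → G} {L : F →L[ℝ] G}
    {x : F} {S : Set F}
    (h : Tendsto (fun y => ‖f y - f x - L (y - x)‖ / ‖y - x‖) (𝓝[S \ {x}] x) (𝓝 0)) :
    ∀ᶠ y in 𝓝[S] x, dist (f y) (f x) ≤ (‖L‖ + 1) * dist y x := by
  refine eventually_nhdsWithin_iff.2 ?_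
  filter_upwards [eventually_nhdsWithin_iff.1 (h.eventually (eventually_lt_nhds one_pos))]
    with y hy hyS
  rcases eq_or_ne y x with rfl | hyx
  · simp
  have hpos : 0 < ‖y - x‖ := norm_pos_iff.2 (sub_ne_zero.2 hyx)
  have hsmall := (div_lt_one hpos).1 (hy ⟨hyS, hyx⟩)
  rw [dist_eq_norm, dist_eq_norm]
  calc ‖f y - f x‖ = ‖(f y - f x - L (y - x)) + L (y - x)‖ := by rw [sub_add_cancel]
    _ ≤ ‖y - x‖ + ‖L‖ * ‖y - x‖ := (norm_add_le _ _).trans (add_le_add hsmall.le (L.le_opNorm _))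
    _ = (‖L‖ + 1) * ‖y - x‖ := by ring

section Tame

variable {E F : Type*} [NormedAddCommGroup E] [NormedSpace ℝ E] [MeasurableSpace E]
  (μ : Measure E) [PseudoMetricSpace F] {f : E → F}

/-- Chosen so that `steepTolerance k * (2 ^ k + 3 ^ k) = 2 ^ k / 2`: the steep sets of two points
at distance `d`, taken at radii `2 * d` and `3 * d`, then fill at most half of the ball of radius
`2 * d` around the first one. -/
def steepTolerance (k : ℕ) : ℝ := 2 ^ k / (2 * (2 ^ k + 3 ^ k))

theorem steepTolerance_pos (k : ℕ) : 0 < steepTolerance k := by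
  unfold steepTolerance; positivity

/-- Rational radii make the set measurable. -/
def tameSet (f : E → F) (K r : ℝ) : Set E :=
  {x | ∀ q : ℚ, 0 < (q : ℝ) → (q : ℝ) < r → μ (steepSet f K x q) ≤
    ENNReal.ofReal (steepTolerance (Module.finrank ℝ E)) * μ (ball x (q / 2))}

theorem measure_steepSet_le_of_mem_tameSet {K r ρ : ℝ} {x : E} (hx : x ∈ tameSet μ f K r)
    (hρ : 0 < ρ) (hρr : ρ < r) :
    μ (steepSet f K x ρ) ≤
      ENNReal.ofReal (steepTolerance (Module.finrank ℝ E)) * μ (ball x ρ) := by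
  obtain ⟨q, hρq, hq⟩ := exists_rat_btwn (lt_min (by linarith : ρ < 2 * ρ) hρr)
  calc μ (steepSet f K x ρ) ≤ μ (steepSet f K x q) := measure_mono (steepSet_mono f K x hρq.le)
    _ ≤ ENNReal.ofReal (steepTolerance (Module.finrank ℝ E)) * μ (ball x (q / 2)) :=
        hx q (hρ.trans hρq) (hq.trans_le (min_le_right _ _))
    _ ≤ ENNReal.ofReal (steepTolerance (Module.finrank ℝ E)) * μ (ball x ρ) := by
        gcongr
        linarith [min_le_left (2 * ρ) r]

end Tame

section AddHaar

variable {E F : Type*} [NormedAddCommGroup E] [NormedSpace ℝ E] [FiniteDimensional ℝ E]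
  [MeasurableSpace E] [BorelSpace E] (μ : Measure E) [μ.IsAddHaarMeasure] [PseudoMetricSpace F]
  {f : E → F}

theorem MeasureTheory.Measure.addHaar_inter_closedBall (s : Set E) (x : E) {r : ℝ} (hr : r ≠ 0) :
    μ (s ∩ closedBall x r) = μ (s ∩ ball x r) := by
  rw [← ball_union_sphere, inter_union_distrib_left]
  exact measure_congr <| union_ae_eq_left_of_ae_eq_empty <| ae_eq_empty.2 <|
    measure_mono_null inter_subset_right (μ.addHaar_sphere_of_ne_zero x hr)

theorem eventually_exists_mem_dist_lt {T : Set E} {x : E}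
    (hT : Tendsto (fun ρ => μ (ball x ρ \ T) / μ (ball x ρ)) (𝓝[>] 0) (𝓝 0)) {ε : ℝ}
    (hε : 0 < ε) : ∀ᶠ y in 𝓝[≠] x, ∃ y' ∈ T, dist y' y < ε * dist y x := by
  set k := Module.finrank ℝ E
  set c := (ε / (1 + ε)) ^ k
  have hc : 0 < c := by positivity
  have hsmall : ∀ᶠ ρ in 𝓝[>] 0, μ (ball x ρ \ T) < ENNReal.ofReal c * μ (ball x ρ) := by
    filter_upwards [hT.eventually (gt_mem_nhds (ENNReal.ofReal_pos.2 hc)), self_mem_nhdsWithin]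
      with ρ hρ (hρ₀ : 0 < ρ)
    exact (ENNReal.div_lt_iff (Or.inl (measure_ball_pos μ x hρ₀).ne')
      (Or.inl measure_ball_lt_top.ne)).1 hρ
  have hscale : Tendsto (fun y => (1 + ε) * dist y x) (𝓝[≠] x) (𝓝[>] 0) := by
    refine tendsto_nhdsWithin_iff.2 ⟨?_, ?_⟩
    · refine tendsto_nhdsWithin_of_tendsto_nhds ?_
      simpa using ((continuous_id.dist (continuous_const (y := x))).tendsto x).const_mul (1 + ε)
    · filter_upwards [self_mem_nhdsWithin] with y (hy : y ≠ x)
      exact mul_pos (by linarith) (dist_pos.2 hy)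
  filter_upwards [hscale.eventually hsmall, self_mem_nhdsWithin] with y hy (hyx : y ≠ x)
  by_contra! hfar
  have hd : 0 < dist y x := dist_pos.2 hyx
  -- the ball of radius `ε d` around `y` misses `T` and fills the fraction `c` of the ball of
  -- radius `(1 + ε) d` around `x`
  have hsub : ball y (ε * dist y x) ⊆ ball x ((1 + ε) * dist y x) \ T := by
    refine fun z hz => ⟨?_, fun hzT => (hfar z hzT).not_gt hz⟩
    rw [mem_ball] at hz ⊢
    linarith [dist_triangle z y x]
  have hvol : ENNReal.ofReal c * μ (ball x ((1 + ε) * dist y x)) = μ (ball y (ε * dist y x)) := by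
    rw [μ.addHaar_ball_of_pos x (by positivity), μ.addHaar_ball_of_pos y (by positivity),
      ← mul_assoc, ← ENNReal.ofReal_mul hc.le, ← mul_pow]
    congr 3
    field_simp
  exact (hvol ▸ (measure_mono hsub).trans_lt hy).false

theorem measurableSet_tameSet [MeasurableSpace F] [OpensMeasurableSpace F]
    [SecondCountableTopology F] (hf : Measurable f) (K r : ℝ) :
    MeasurableSet (tameSet μ f K r) := by
  simp only [tameSet, ofPred_forall]
  refine MeasurableSet.iInter fun q => MeasurableSet.iInter fun _ => MeasurableSet.iInter fun _ =>
    measurableSet_le (measurable_measure_steepSet μ hf K q) ?_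
  simp_rw [μ.addHaar_ball_center]
  exact measurable_const

theorem dist_le_of_mem_tameSet {K r : ℝ} (hK : 0 ≤ K) {x z : E} (hx : x ∈ tameSet μ f K r)
    (hz : z ∈ tameSet μ f K r) (hxz : dist x z < r / 3) :
    dist (f x) (f z) ≤ 5 * K * dist x z := by
  rcases eq_or_ne x z with rfl | hne
  · simp
  set k := Module.finrank ℝ E
  set d := dist x z
  have hd : 0 < d := dist_pos.2 hne
  have hV : μ (ball (0 : E) 1) ≠ 0 := (measure_ball_pos μ 0 one_pos).ne'
  refine dist_le_of_measure_steepSet_add_lt (μ := μ) hK ?_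
  calc μ (steepSet f K x (2 * d)) + μ (steepSet f K z (3 * d))
      ≤ ENNReal.ofReal (steepTolerance k) * μ (ball x (2 * d)) +
          ENNReal.ofReal (steepTolerance k) * μ (ball z (3 * d)) :=
        add_le_add (measure_steepSet_le_of_mem_tameSet μ hx (by positivity) (by linarith))
          (measure_steepSet_le_of_mem_tameSet μ hz (by positivity) (by linarith))
    _ = ENNReal.ofReal ((2 * d) ^ k / 2) * μ (ball (0 : E) 1) := by
        rw [μ.addHaar_ball_of_pos x (by positivity), μ.addHaar_ball_of_pos z (by positivity),
          ← mul_assoc, ← mul_assoc, ← add_mul, ← ENNReal.ofReal_mul (steepTolerance_pos k).le,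
          ← ENNReal.ofReal_mul (steepTolerance_pos k).le,
          ← ENNReal.ofReal_add (mul_nonneg (steepTolerance_pos k).le (by positivity))
            (mul_nonneg (steepTolerance_pos k).le (by positivity))]
        congr 2
        simp only [steepTolerance, mul_pow]
        field_simp
        ring
    _ < ENNReal.ofReal ((2 * d) ^ k) * μ (ball (0 : E) 1) := by
        gcongr
        · exact measure_ball_lt_top.ne
        · exact (ENNReal.ofReal_lt_ofReal_iff (by positivity)).2
            (by linarith [pow_pos (by positivity : 0 < 2 * d) k])
    _ = μ (ball x (2 * d)) := (μ.addHaar_ball_of_pos x (by positivity)).symm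

theorem eventually_mem_tameSet {x : E} {S : Set E}
    (hS : Tendsto (fun ρ => μ (ball x ρ \ S) / μ (ball x ρ)) (𝓝[>] 0) (𝓝 0)) {C : ℝ}
    (hC : ∀ᶠ y in 𝓝[S] x, dist (f y) (f x) ≤ C * dist y x) :
    ∀ᶠ i : ℕ in atTop, x ∈ tameSet μ f i (1 / (i + 1)) := by
  set k := Module.finrank ℝ E
  set δ := steepTolerance k
  have hδ : 0 < δ / 2 ^ k := div_pos (steepTolerance_pos k) (by positivity)
  obtain ⟨r₁, hr₁, hsmall⟩ := mem_nhdsGT_iff_exists_Ioo_subset.1 <|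
    hS.eventually (gt_mem_nhds (ENNReal.ofReal_pos.2 hδ))
  obtain ⟨r₂, hr₂, hlip⟩ := Metric.eventually_nhds_iff.1 (eventually_nhdsWithin_iff.1 hC)
  filter_upwards [tendsto_natCast_atTop_atTop.eventually_ge_atTop C,
    tendsto_one_div_add_atTop_nhds_zero_nat.eventually (gt_mem_nhds (lt_min hr₁ hr₂))]
    with i hCi hir q hq hqi
  have hqr := hqi.trans hir
  have hsub : steepSet f i x q ⊆ ball x q \ S := fun y ⟨hyq, hy⟩ =>
    ⟨hyq, fun hyS => hy.not_ge <| (hlip (hyq.trans (hqr.trans_le (min_le_right _ _))) hyS).trans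
      (mul_le_mul_of_nonneg_right hCi dist_nonneg)⟩
  have hball₀ : μ (ball x q) ≠ 0 := (measure_ball_pos μ x hq).ne'
  calc μ (steepSet f i x q) ≤ μ (ball x q \ S) := measure_mono hsub
    _ ≤ ENNReal.ofReal (δ / 2 ^ k) * μ (ball x q) :=
        ((ENNReal.div_lt_iff (Or.inl hball₀) (Or.inl measure_ball_lt_top.ne)).1
          (hsmall ⟨hq, hqr.trans_le (min_le_left _ _)⟩)).le
    _ = ENNReal.ofReal δ * μ (ball x (q / 2)) := by
        rw [μ.addHaar_ball_of_pos x hq, μ.addHaar_ball_of_pos x (by positivity), ← mul_assoc,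
          ← mul_assoc, ← ENNReal.ofReal_mul hδ.le, ← ENNReal.ofReal_mul (steepTolerance_pos k).le]
        congr 2
        rw [div_pow]
        field_simp
        ring

end AddHaar

theorem lintegral_image_eq_lintegral_abs_det_fderiv_mul_of_ae_iUnion {E : Type*}
    [NormedAddCommGroup E] [NormedSpace ℝ E] [FiniteDimensional ℝ E] [MeasurableSpace E]
    [BorelSpace E] (μ : Measure E) [μ.IsAddHaarMeasure] {f : E → E} {f' : E → E →L[ℝ] E}
    {s : Set E} {K : ℕ → Set E} (hK : ∀ i, MeasurableSet (K i)) (hKs : ∀ i, K i ⊆ s)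
    (hdisj : Pairwise (Function.onFun Disjoint K))
    (hf' : ∀ i, ∀ x ∈ K i, HasFDerivWithinAt f (f' x) (K i) x) (hf : InjOn f s)
    (hs : μ (s \ ⋃ i, K i) = 0) (hfs : μ (f '' (s \ ⋃ i, K i)) = 0) (g : E → ℝ≥0∞) :
    ∫⁻ x in f '' s, g x ∂μ = ∫⁻ x in s, ENNReal.ofReal |(f' x).det| * g (f x) ∂μ := by
  have hUs : (⋃ i, K i) ⊆ s := iUnion_subset hKs
  have hs_ae : (⋃ i, K i) =ᵐ[μ] s := ae_eq_set.2 ⟨by simp [sdiff_eq_empty.2 hUs], hs⟩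
  have hfs_ae : (⋃ i, f '' K i) =ᵐ[μ] f '' s := by
    refine ae_eq_set.2 ⟨by simp [sdiff_eq_empty.2 (image_mono hUs), ← image_iUnion], ?_⟩
    refine measure_mono_null ?_ hfs
    rintro _ ⟨⟨x, hx, rfl⟩, hy⟩
    refine ⟨x, ⟨hx, fun hxU => hy ?_⟩, rfl⟩
    rw [← image_iUnion]
    exact mem_image_of_mem f hxU
  have hinj : ∀ i, InjOn f (K i) := fun i => hf.mono (hKs i)
  calc ∫⁻ y in f '' s, g y ∂μ = ∑' i, ∫⁻ y in f '' K i, g y ∂μ := by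
        rw [← Measure.restrict_congr_set hfs_ae]
        refine lintegral_iUnion (fun i => measurable_image_of_fderivWithin (hK i) (hf' i) (hinj i))
          (fun i j hij => (hdisj hij).image hf (hKs i) (hKs j)) _
    _ = ∑' i, ∫⁻ x in K i, ENNReal.ofReal |(f' x).det| * g (f x) ∂μ :=
        tsum_congr fun i =>
          lintegral_image_eq_lintegral_abs_det_fderiv_mul μ (hK i) (hf' i) (hinj i) g
    _ = ∫⁻ x in s, ENNReal.ofReal |(f' x).det| * g (f x) ∂μ := by
        rw [← Measure.restrict_congr_set hs_ae, lintegral_iUnion hK hdisj]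

theorem exists_pairwise_disjoint_subsets_ae_cover {α : Type*} [MeasurableSpace α] {μ : Measure α}
    {A : Set α} {G : ℕ → Set α} {P : ℕ → α → Prop} (hG : ∀ i, MeasurableSet (G i))
    (hcover : ∀ᵐ x ∂μ.restrict A, ∃ i, x ∈ G i) (hP : ∀ i, ∀ᵐ x ∂μ.restrict (G i), P i x) :
    ∃ K : ℕ → Set α, (∀ i, MeasurableSet (K i)) ∧ (∀ i, K i ⊆ G i) ∧
      Pairwise (Function.onFun Disjoint K) ∧ μ (A \ ⋃ i, K i) = 0 ∧ ∀ i, ∀ x ∈ K i, P i x := by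
  set N : ℕ → Set α := fun i => toMeasurable μ {x | ¬(x ∈ G i → P i x)}
  have hN : ∀ i, μ (N i) = 0 := fun i => by
    rw [measure_toMeasurable, ← ae_iff, ← ae_restrict_iff' (hG i)]
    exact hP i
  have hA : μ (A \ ⋃ i, G i) = 0 := by
    have h := ae_iff.1 hcover
    rwa [show {x | ¬∃ i, x ∈ G i} = (⋃ i, G i)ᶜ by ext; simp,
      Measure.restrict_apply (MeasurableSet.iUnion hG).compl, inter_comm, ← sdiff_eq] at h
  refine ⟨disjointed fun i => G i \ N i, MeasurableSet.disjointed fun i =>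
      (hG i).diff (measurableSet_toMeasurable _ _), fun i => (disjointed_subset _ i).trans
      sdiff_subset, disjoint_disjointed _, ?_, fun i x hx => ?_⟩
  · refine measure_mono_null (fun x ⟨hxA, hx⟩ => ?_) (measure_union_null hA
      (measure_iUnion_null hN))
    rw [iUnion_disjointed] at hx
    by_cases hxG : ∃ i, x ∈ G i
    · obtain ⟨i, hi⟩ := hxG
      exact Or.inr (mem_iUnion.2 ⟨i, by_contra fun h => hx (mem_iUnion.2 ⟨i, hi, h⟩)⟩)
    · exact Or.inl ⟨hxA, by simpa using hxG⟩
  · obtain ⟨hxG, hxN⟩ := disjointed_subset _ i hx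
    by_contra h
    exact hxN (subset_toMeasurable _ _ fun h' => h (h' hxG))

section Euclidean

variable {n : ℕ}

theorem ae_densityPt (s : Set (Euc n)) : ∀ᵐ x ∂volume.restrict s, DensityPt s x := by
  filter_upwards [Besicovitch.ae_tendsto_measure_inter_div volume s] with x hx
  refine hx.congr' ?_
  filter_upwards [self_mem_nhdsWithin] with ρ (hρ : 0 < ρ)
  rw [Measure.addHaar_inter_closedBall _ s x hρ.ne', ← univ_inter (closedBall x ρ),
    Measure.addHaar_inter_closedBall _ univ x hρ.ne', univ_inter]

theorem DensityPt.tendsto_measure_diff_div {S : Set (Euc n)} {x : Euc n} (hS : MeasurableSet S)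
    (h : DensityPt S x) :
    Tendsto (fun ρ => volume (ball x ρ \ S) / volume (ball x ρ)) (𝓝[>] 0) (𝓝 0) := by
  have h₁ : Tendsto (fun ρ => 1 - volume (S ∩ ball x ρ) / volume (ball x ρ)) (𝓝[>] 0) (𝓝 0) := by
    simpa using ENNReal.Tendsto.sub tendsto_const_nhds h (Or.inl one_ne_top)
  refine h₁.congr' ?_
  filter_upwards [self_mem_nhdsWithin] with ρ (hρ : 0 < ρ)
  have hball₀ : volume (ball x ρ) ≠ 0 := (measure_ball_pos volume x hρ).ne'
  have hball : volume (ball x ρ) ≠ ∞ := measure_ball_lt_top.ne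
  rw [← ENNReal.div_self hball₀ hball, ← ENNReal.sub_div (fun _ _ => hball₀), inter_comm,
    ← measure_sdiff_add_inter (ball x ρ) hS, ENNReal.add_sub_cancel_right]
  exact ne_top_of_le_ne_top hball (measure_mono inter_subset_left)

theorem HasApproxDerivAt.hasFDerivWithinAt {f : Euc n → Euc n} {L : Euc n →L[ℝ] Euc n}
    {x : Euc n} {E : Set (Euc n)} {M r : ℝ} (hM : 0 ≤ M) (hr : 0 < r)
    (hLip : ∀ y ∈ E, ∀ z ∈ E, dist y z < r → dist (f y) (f z) ≤ M * dist y z)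
    (hE : MeasurableSet E) (hf : HasApproxDerivAt f L x) (hx : DensityPt E x) :
    HasFDerivWithinAt f L E x := by
  obtain ⟨S, hS, hSx, hlim⟩ := hf
  rw [hasFDerivWithinAt_iff_isLittleO, Asymptotics.isLittleO_iff]
  intro c hc
  have hε : Tendsto (fun ε => (M + ‖L‖) * ε + c / 3 * (1 + ε)) (𝓝[>] 0) (𝓝 (c / 3)) := by
    refine tendsto_nhdsWithin_of_tendsto_nhds ?_
    convert (Continuous.tendsto (f := fun ε : ℝ => (M + ‖L‖) * ε + c / 3 * (1 + ε))
      (by fun_prop) 0) using 2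
    simp
  obtain ⟨ε, hεc, hε₀ : 0 < ε⟩ :=
    ((hε.eventually (gt_mem_nhds (show c / 3 < c by linarith))).and self_mem_nhdsWithin).exists
  have hnear := eventually_nhdsWithin_iff.1 <| eventually_exists_mem_dist_lt volume
    (tendsto_measure_ball_diff_inter_div (hSx.tendsto_measure_diff_div hS)
      (hx.tendsto_measure_diff_div hE)) hε₀
  obtain ⟨r₁, hr₁, happrox⟩ := Metric.eventually_nhds_iff.1 <| eventually_nhdsWithin_iff.1 <|
    hlim.eventually (eventually_lt_nhds (by positivity : 0 < c / 3))
  have hclose : ∀ᶠ y in 𝓝 x, (1 + ε) * dist y x < min r₁ r := by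
    refine (tendsto_order.1 ?_).2 _ (lt_min hr₁ hr)
    simpa using ((continuous_id.dist (continuous_const (y := x))).tendsto x).const_mul (1 + ε)
  filter_upwards [nhdsWithin_le_nhds hnear, nhdsWithin_le_nhds hclose, self_mem_nhdsWithin]
    with y hnear hclose (hyE : y ∈ E)
  rcases eq_or_ne y x with rfl | hyx
  · simp
  obtain ⟨y', ⟨hy'S, hy'E⟩, hy'y⟩ := hnear hyx
  have hd := dist_nonneg (x := y) (y := x)
  have hy'x : dist y' x < r₁ := by
    linarith [dist_triangle y' y x, min_le_left r₁ r]
  have hy' : ‖f y' - f x - L (y' - x)‖ ≤ c / 3 * ‖y' - x‖ := by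
    rcases eq_or_ne y' x with rfl | hy'x'
    · simp
    have hpos : 0 < ‖y' - x‖ := norm_pos_iff.2 (sub_ne_zero.2 hy'x')
    exact ((div_lt_iff₀ hpos).1 (happrox hy'x ⟨hy'S, hy'x'⟩)).le
  have hLip' := hLip y hyE y' hy'E (by
    rw [dist_comm]; linarith [min_le_right r₁ r])
  calc ‖f y - f x - L (y - x)‖ ≤ ((M + ‖L‖) * ε + c / 3 * (1 + ε)) * ‖y - x‖ :=
        norm_sub_sub_le_of_dist_le hM (by positivity) hLip' hy' hy'y.le
    _ ≤ c * ‖y - x‖ := mul_le_mul_of_nonneg_right hεc.le (norm_nonneg _)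

theorem HasApproxDerivAt.congr_of_eventuallyEq {f g : Euc n → Euc n} {L : Euc n →L[ℝ] Euc n}
    {x : Euc n} (h : HasApproxDerivAt f L x) (hfg : f =ᶠ[𝓝 x] g) : HasApproxDerivAt g L x := by
  obtain ⟨S, hS, hSx, hlim⟩ := h
  refine ⟨S, hS, hSx, hlim.congr' ?_⟩
  filter_upwards [nhdsWithin_le_nhds hfg] with y hy
  rw [hy, hfg.eq_of_nhds]

theorem exists_pairwise_disjoint_hasFDerivWithinAt_ae_cover {f : Euc n → Euc n}
    (hf : Measurable f) {A : Set (Euc n)} (hA : MeasurableSet A) {D : Euc n → Euc n →L[ℝ] Euc n}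
    (hD : ∀ᵐ x ∂volume.restrict A, HasApproxDerivAt f (D x) x) :
    ∃ K : ℕ → Set (Euc n), (∀ i, MeasurableSet (K i)) ∧ (∀ i, K i ⊆ A) ∧
      Pairwise (Function.onFun Disjoint K) ∧ volume (A \ ⋃ i, K i) = 0 ∧
      ∀ i, ∀ x ∈ K i, HasFDerivWithinAt f (D x) (K i) x := by
  set G : ℕ → Set (Euc n) := fun i => A ∩ tameSet volume f i (1 / (i + 1))
  have hG : ∀ i, MeasurableSet (G i) := fun i => hA.inter (measurableSet_tameSet volume hf _ _)
  have hcover : ∀ᵐ x ∂volume.restrict A, ∃ i, x ∈ G i := by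
    filter_upwards [hD, ae_restrict_mem hA] with x ⟨S, hS, hSx, hlim⟩ hxA
    obtain ⟨i, hi⟩ := (eventually_mem_tameSet volume (hSx.tendsto_measure_diff_div hS)
      (eventually_dist_le_of_tendsto_div hlim)).exists
    exact ⟨i, hxA, hi⟩
  have hderiv : ∀ i, ∀ᵐ x ∂volume.restrict (G i), HasFDerivWithinAt f (D x) (G i) x := by
    intro i
    filter_upwards [ae_densityPt (G i), ae_restrict_of_ae_restrict_of_subset inter_subset_left hD]
      with x hx hDx
    exact hDx.hasFDerivWithinAt (M := 5 * i) (r := 1 / (i + 1) / 3) (by positivity)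
      (by positivity) (fun y hy z hz hyz => dist_le_of_mem_tameSet volume (Nat.cast_nonneg i)
        hy.2 hz.2 hyz) (hG i) hx
  obtain ⟨K, hK, hKG, hdisj, hnull, hKderiv⟩ :=
    exists_pairwise_disjoint_subsets_ae_cover hG hcover hderiv
  exact ⟨K, hK, fun i => (hKG i).trans inter_subset_left, hdisj, hnull,
    fun i x hx => (hKderiv i x hx).mono (hKG i)⟩

end Euclidean

theorem stmt3_general (n : ℕ) (Ω : Set (Euc n)) (hΩ : IsOpen Ω) (Φ Ψ : Euc n → Euc n)
    (hcont : ContinuousOn Φ Ω) (hinj : InjOn Φ Ω)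
    (hΨ : ∀ x ∈ Ω, Ψ (Φ x) = x)
    (hLusin : ∀ E ⊆ Ω, volume E = 0 → volume (Φ '' E) = 0)
    (D : Euc n → (Euc n →L[ℝ] Euc n))
    (hD : ∀ᵐ x ∂(volume.restrict Ω), HasApproxDerivAt Φ (D x) x)
    (g : Euc n → ℝ≥0∞) :
    ∫⁻ x in Ω, g x * ENNReal.ofReal |(D x).det| =
      ∫⁻ y in Φ '' Ω, g (Ψ y) := by
  classical
  -- the decomposition needs a globally measurable map
  set Φ₀ := Ω.piecewise Φ 0
  have hΦ₀ : EqOn Φ₀ Φ Ω := piecewise_eqOn _ _ _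
  obtain ⟨K, hK, hKΩ, hdisj, hnull, hderiv⟩ :=
    exists_pairwise_disjoint_hasFDerivWithinAt_ae_cover
      (hcont.measurable_piecewise continuousOn_const hΩ.measurableSet) hΩ.measurableSet
      (D := D) <| by
        filter_upwards [hD, ae_restrict_mem hΩ.measurableSet] with x hx hxΩ
        exact hx.congr_of_eventuallyEq (hΦ₀.eventuallyEq_of_mem (hΩ.mem_nhds hxΩ)).symm
  rw [lintegral_image_eq_lintegral_abs_det_fderiv_mul_of_ae_iUnion volume hK hKΩ hdisj
    (fun i x hx => (hderiv i x hx).congr (hΦ₀.symm.mono (hKΩ i)) (hΦ₀ (hKΩ i hx)).symm)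
    hinj hnull (hLusin _ sdiff_subset hnull)]
  exact setLIntegral_congr_fun hΩ.measurableSet fun x hx => by rw [hΨ x hx, mul_comm]

theorem stmt3 (n : ℕ) (Ω : Set (Euc n)) (hΩ : IsOpen Ω) (Φ Ψ : Euc n → Euc n)
    (hcont : ContinuousOn Φ Ω) (hinj : InjOn Φ Ω)
    (hΨcont : ContinuousOn Ψ (Φ '' Ω)) (hΨ : ∀ x ∈ Ω, Ψ (Φ x) = x)
    (hLusin : ∀ E ⊆ Ω, volume E = 0 → volume (Φ '' E) = 0)
    (D : Euc n → (Euc n →L[ℝ] Euc n))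
    (hD : ∀ᵐ x ∂(volume.restrict Ω), HasApproxDerivAt Φ (D x) x)
    (g : Euc n → ℝ≥0∞) (hg : Measurable g) :
    ∫⁻ x in Ω, g x * ENNReal.ofReal |(D x).det| =
      ∫⁻ y in Φ '' Ω, g (Ψ y) :=
  stmt3_general n Ω hΩ Φ Ψ hcont hinj hΨ hLusin D hD g
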